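/- Let D > 0 and ρ > 0, and set θ(x,t) = (1/2) √(3ρ/(2D)) ( x − √(ρD/6) t ). The pair u(x,t) = (1/2)(1 + tanh θ(x,t)), v(x,t) = (3/4)(1 − tanh θ(x,t))² satisfies the Lotka–Volterra competition-diffusion system ∂u/∂t = D ∂²u/∂x² + ρ u(1 − u − v) and ∂v/∂t = (D/3) ∂²v/∂x² + ρ v(3 − 4u − v) at every point (x,t) ∈ ℝ². -/

import Mathlib

/-!
Both components are polynomials in `T = tanh θ` (`lvProfileU`, `lvProfileV`), and since
`tanh' = 1 - tanh²`, differentiating `z ↦ p (tanh z)` amounts to `p ↦ p' (1 - X²)`. The phase `θ` is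
affine in `x` and `t`, so `∂ₜ` and `∂ₓ²` of each component are such polynomials scaled by `-k c` and
`k²` (`k` the wave number, `c` the speed), and `k c = ρ / 4`, `D k² = 3ρ / 8`. Each equation thus
becomes `ρ` times a polynomial identity in `T`.
-/

/-- The traveling wave phase variable for the Lotka–Volterra system. -/
noncomputable def lvTheta (D ρ x t : ℝ) : ℝ :=
  (1 / 2) * Real.sqrt (3 * ρ / (2 * D)) * (x - Real.sqrt (ρ * D / 6) * t)

/-- The first component of the Lotka–Volterra traveling wave. -/
noncomputable def lvU (D ρ x t : ℝ) : ℝ := (1 / 2) * (1 + Real.tanh (lvTheta D ρ x t))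

/-- The second component of the Lotka–Volterra traveling wave. -/
noncomputable def lvV (D ρ x t : ℝ) : ℝ := (3 / 4) * (1 - Real.tanh (lvTheta D ρ x t)) ^ 2

open Polynomial Real

theorem Real.hasDerivAt_tanh (x : ℝ) : HasDerivAt tanh (1 - tanh x ^ 2) x := by
  have h := (hasDerivAt_sinh x).div (hasDerivAt_cosh x) (cosh_pos x).ne'
  rw [show sinh / cosh = tanh from funext fun z => (tanh_eq_sinh_div_cosh z).symm] at h
  refine h.congr_deriv ?_
  rw [tanh_eq_sinh_div_cosh]
  field_simp

theorem Real.contDiff_tanh {n : WithTop ℕ∞} : ContDiff ℝ n tanh := by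
  rw [show tanh = fun z => sinh z / cosh z from funext tanh_eq_sinh_div_cosh]
  exact contDiff_sinh.div contDiff_cosh fun x => (cosh_pos x).ne'

theorem iteratedDeriv_comp_mul_add {𝕜 : Type*} [NontriviallyNormedField 𝕜] {n : ℕ} {f : 𝕜 → 𝕜}
    (hf : ContDiff 𝕜 n f) (a b : 𝕜) :
    iteratedDeriv n (fun y => f (a * y + b)) = fun y => a ^ n * iteratedDeriv n f (a * y + b) := by
  rw [iteratedDeriv_comp_const_mul (f := fun z => f (z + b))
    (hf.comp (contDiff_id.add contDiff_const)), iteratedDeriv_comp_add_const]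

namespace Polynomial

noncomputable def tanhDerivative (p : ℝ[X]) : ℝ[X] := derivative p * (1 - X ^ 2)

theorem hasDerivAt_eval_tanh (p : ℝ[X]) (x : ℝ) :
    HasDerivAt (fun z => p.eval (tanh z)) ((tanhDerivative p).eval (tanh x)) x := by
  rw [tanhDerivative, eval_mul, eval_sub, eval_one, eval_pow, eval_X]
  exact (p.hasDerivAt (tanh x)).comp x (hasDerivAt_tanh x)

theorem contDiff_eval_tanh (p : ℝ[X]) {n : WithTop ℕ∞} : ContDiff ℝ n fun z => p.eval (tanh z) :=
  (p.contDiff_aeval n).comp contDiff_tanh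

theorem deriv_eval_tanh (p : ℝ[X]) :
    deriv (fun z => p.eval (tanh z)) = fun z => (tanhDerivative p).eval (tanh z) := by
  ext x
  exact (hasDerivAt_eval_tanh p x).deriv

theorem iteratedDeriv_eval_tanh (p : ℝ[X]) (n : ℕ) :
    iteratedDeriv n (fun z => p.eval (tanh z)) = fun z => (tanhDerivative^[n] p).eval (tanh z) := by
  induction n generalizing p with
  | zero => simp
  | succ n ih =>
    rw [iteratedDeriv_succ', deriv_eval_tanh, ih, Function.iterate_succ_apply]

end Polynomial

noncomputable def lvWaveNumber (D ρ : ℝ) : ℝ := (1 / 2) * √(3 * ρ / (2 * D))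

noncomputable def lvWaveSpeed (D ρ : ℝ) : ℝ := √(ρ * D / 6)

theorem lvWaveNumber_mul_lvWaveSpeed {D ρ : ℝ} (hD : 0 < D) (hρ : 0 ≤ ρ) :
    lvWaveNumber D ρ * lvWaveSpeed D ρ = ρ / 4 := by
  have h : 3 * ρ / (2 * D) * (ρ * D / 6) = (ρ / 2) ^ 2 := by
    field_simp
    ring
  rw [lvWaveNumber, lvWaveSpeed, mul_assoc, ← sqrt_mul (by positivity), h, sqrt_sq (by positivity)]
  ring

theorem mul_lvWaveNumber_sq {D ρ : ℝ} (hD : 0 < D) (hρ : 0 ≤ ρ) :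
    D * lvWaveNumber D ρ ^ 2 = 3 * ρ / 8 := by
  rw [lvWaveNumber, mul_pow, sq_sqrt (by positivity)]
  field_simp
  ring

theorem lvTheta_eq (D ρ x t : ℝ) :
    lvTheta D ρ x t = lvWaveNumber D ρ * x - lvWaveNumber D ρ * lvWaveSpeed D ρ * t := by
  rw [lvTheta, lvWaveNumber, lvWaveSpeed]
  ring

theorem deriv_eval_tanh_lvTheta_time (p : ℝ[X]) (D ρ x t : ℝ) :
    deriv (fun s => p.eval (tanh (lvTheta D ρ x s))) t =
      -(lvWaveNumber D ρ * lvWaveSpeed D ρ) * (tanhDerivative p).eval (tanh (lvTheta D ρ x t)) := by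
  have hθ (s : ℝ) : lvTheta D ρ x s =
      -(lvWaveNumber D ρ * lvWaveSpeed D ρ) * s + lvWaveNumber D ρ * x := by
    rw [lvTheta_eq]
    ring
  simp only [hθ]
  rw [← iteratedDeriv_one, iteratedDeriv_comp_mul_add (contDiff_eval_tanh p), pow_one,
    iteratedDeriv_one, deriv_eval_tanh]

theorem iteratedDeriv_two_eval_tanh_lvTheta_space (p : ℝ[X]) (D ρ x t : ℝ) :
    iteratedDeriv 2 (fun y => p.eval (tanh (lvTheta D ρ y t))) x =
      lvWaveNumber D ρ ^ 2 * (tanhDerivative^[2] p).eval (tanh (lvTheta D ρ x t)) := by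
  have hθ (y : ℝ) : lvTheta D ρ y t =
      lvWaveNumber D ρ * y + -(lvWaveNumber D ρ * lvWaveSpeed D ρ * t) := by
    rw [lvTheta_eq]
    ring
  simp only [hθ]
  rw [iteratedDeriv_comp_mul_add (contDiff_eval_tanh p), iteratedDeriv_eval_tanh]

noncomputable def lvProfileU : ℝ[X] := C (1 / 2) * (1 + X)

noncomputable def lvProfileV : ℝ[X] := C (3 / 4) * (1 - X) ^ 2

theorem lvU_eq_eval (D ρ x t : ℝ) : lvU D ρ x t = lvProfileU.eval (tanh (lvTheta D ρ x t)) := by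
  simp [lvU, lvProfileU]

theorem lvV_eq_eval (D ρ x t : ℝ) : lvV D ρ x t = lvProfileV.eval (tanh (lvTheta D ρ x t)) := by
  simp [lvV, lvProfileV]

theorem lvProfile_ode (T : ℝ) :
    -(1 / 4) * (tanhDerivative lvProfileU).eval T =
        (3 / 8) * (tanhDerivative^[2] lvProfileU).eval T +
          lvProfileU.eval T * (1 - lvProfileU.eval T - lvProfileV.eval T) ∧
      -(1 / 4) * (tanhDerivative lvProfileV).eval T =
        (1 / 8) * (tanhDerivative^[2] lvProfileV).eval T +
          lvProfileV.eval T * (3 - 4 * lvProfileU.eval T - lvProfileV.eval T) := by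
  refine ⟨?_, ?_⟩ <;>
  · simp only [tanhDerivative, lvProfileU, lvProfileV, Function.iterate_succ_apply,
      Function.iterate_zero_apply, derivative_mul, derivative_add, derivative_sub, derivative_pow,
      derivative_C, derivative_X, derivative_one, derivative_zero, eval_mul, eval_add, eval_sub,
      eval_pow, eval_C, eval_X, eval_one, eval_zero]
    ring

/-- The Lotka–Volterra traveling wave pair satisfies the competition-diffusion system
∂u/∂t = D ∂²u/∂x² + ρ u (1 − u − v), ∂v/∂t = (D/3) ∂²v/∂x² + ρ v (3 − 4u − v) everywhere. -/
theorem lvWave_solves_lotkaVolterra (D ρ : ℝ) (hD : 0 < D) (hρ : 0 < ρ) (x t : ℝ) :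
    deriv (fun s => lvU D ρ x s) t =
      D * iteratedDeriv 2 (fun y => lvU D ρ y t) x +
        ρ * lvU D ρ x t * (1 - lvU D ρ x t - lvV D ρ x t) ∧
    deriv (fun s => lvV D ρ x s) t =
      (D / 3) * iteratedDeriv 2 (fun y => lvV D ρ y t) x +
        ρ * lvV D ρ x t * (3 - 4 * lvU D ρ x t - lvV D ρ x t) := by
  have hkc := lvWaveNumber_mul_lvWaveSpeed hD hρ.le
  have hk2 := mul_lvWaveNumber_sq hD hρ.le
  simp only [lvU_eq_eval, lvV_eq_eval, deriv_eval_tanh_lvTheta_time,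
    iteratedDeriv_two_eval_tanh_lvTheta_space]
  set T := tanh (lvTheta D ρ x t)
  obtain ⟨hU, hV⟩ := lvProfile_ode T
  constructor
  · linear_combination ρ * hU - (tanhDerivative lvProfileU).eval T * hkc -
      (tanhDerivative^[2] lvProfileU).eval T * hk2
  · linear_combination ρ * hV - (tanhDerivative lvProfileV).eval T * hkc -
      (tanhDerivative^[2] lvProfileV).eval T / 3 * hk2
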